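/- Let 0 < ρ < 1 and let t be a real number with 0 ≤ t < 1/2. If t ≤ 3/4 − (1/4)·√(1 + 8√((1 − ρ)/(1 − (2/3)ρ))), then (1 − ρ)/((1 − t)²(1 − 2t)²) ≤ 1 − (2/3)ρ. -/

import Mathlib

open Matrix MeasureTheory Filter
open scoped Classical

noncomputable section

/-- Vectors in `ℝ^d` with the Euclidean (2-)norm. -/
abbrev Vec (d : ℕ) := EuclideanSpace ℝ (Fin d)

/-- Matrix square root of a positive semidefinite matrix (junk value `0` otherwise). -/
noncomputable def msqrt {d : ℕ} (M : Matrix (Fin d) (Fin d) ℝ) : Matrix (Fin d) (Fin d) ℝ :=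
  if h : M.PosSemidef then
    h.1.eigenvectorUnitary.1 * diagonal (RCLike.ofReal ∘ Real.sqrt ∘ h.1.eigenvalues) *
      (star h.1.eigenvectorUnitary : Matrix (Fin d) (Fin d) ℝ)
  else 0

/-- Frobenius norm of a square matrix. -/
noncomputable def frobNorm {d : ℕ} (M : Matrix (Fin d) (Fin d) ℝ) : ℝ :=
  Real.sqrt (Matrix.trace (Mᵀ * M))

/-- Weighted Frobenius norm `‖W‖_{F(H)} = ‖H^{1/2} W H^{1/2}‖_F`. -/
noncomputable def wFrob {d : ℕ} (H W : Matrix (Fin d) (Fin d) ℝ) : ℝ :=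
  frobNorm (msqrt H * W * msqrt H)

/-- Local norm `‖v‖_H = √⟨H v, v⟩`. -/
noncomputable def localNorm {d : ℕ} (H : Matrix (Fin d) (Fin d) ℝ) (v : Vec d) : ℝ :=
  Real.sqrt (inner ℝ (Matrix.toEuclideanLin H v) v : ℝ)

/-- `f` is self-concordant, expressed through its Hessian map `Hf`:
the Hessian is everywhere positive definite and the local norms at nearby points are
comparable. -/
def SelfConcordant {d : ℕ} (Hf : Vec d → Matrix (Fin d) (Fin d) ℝ) : Prop :=
  (∀ x, (Hf x).PosDef) ∧
  ∀ x y v : Vec d, localNorm (Hf x) (y - x) < 1 → v ≠ 0 →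
    1 - localNorm (Hf x) (y - x) ≤ localNorm (Hf y) v / localNorm (Hf x) v ∧
      localNorm (Hf y) v / localNorm (Hf x) v ≤ 1 / (1 - localNorm (Hf x) (y - x))

/-- `g` is the gradient of `f` and `Hf` is its Hessian (the derivative of the gradient). -/
def IsGradHess {d : ℕ} (f : Vec d → ℝ) (g : Vec d → Vec d)
    (Hf : Vec d → Matrix (Fin d) (Fin d) ℝ) : Prop :=
  (∀ x, HasGradientAt f (g x) x) ∧
  ∀ x, HasFDerivAt g (Matrix.toEuclideanCLM (𝕜 := ℝ) (Hf x) : Vec d →L[ℝ] Vec d) x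

/-- Smallest eigenvalue of a symmetric matrix, via the Rayleigh quotient. -/
noncomputable def lambdaMin {d : ℕ} (M : Matrix (Fin d) (Fin d) ℝ) : ℝ :=
  ⨅ v : {v : Vec d // ‖v‖ = 1}, (inner ℝ (Matrix.toEuclideanLin M v.1) v.1 : ℝ)

/-- Entrywise expectation of a random matrix. -/
noncomputable def expMat {Ω : Type*} [MeasurableSpace Ω] (μ : Measure Ω)
    {m n : ℕ} (M : Ω → Matrix (Fin m) (Fin n) ℝ) : Matrix (Fin m) (Fin n) ℝ :=
  Matrix.of fun i j => ∫ ω, M ω i j ∂μ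

/-- The projection matrix `Z = H^{1/2} S (Sᵀ H S)⁻¹ Sᵀ H^{1/2}`. -/
noncomputable def sketchProj {d τ : ℕ} (H : Matrix (Fin d) (Fin d) ℝ)
    (S : Matrix (Fin d) (Fin τ) ℝ) : Matrix (Fin d) (Fin d) ℝ :=
  msqrt H * S * (Sᵀ * H * S)⁻¹ * Sᵀ * msqrt H

/-- The (randomized) BFGS update
`BFGS(B, H, S) = G + (I - G H) B (I - H G)` with `G = S (Sᵀ H S)⁻¹ Sᵀ`. -/
noncomputable def bfgsUpdate {d τ : ℕ} (B H : Matrix (Fin d) (Fin d) ℝ)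
    (S : Matrix (Fin d) (Fin τ) ℝ) : Matrix (Fin d) (Fin d) ℝ :=
  S * (Sᵀ * H * S)⁻¹ * Sᵀ +
    (1 - S * (Sᵀ * H * S)⁻¹ * Sᵀ * H) * B * (1 - H * (S * (Sᵀ * H * S)⁻¹ * Sᵀ))

/-- Spectral (operator 2-)norm of a matrix. -/
noncomputable def opNorm2 {d : ℕ} (M : Matrix (Fin d) (Fin d) ℝ) : ℝ :=
  ‖(Matrix.toEuclideanCLM (𝕜 := ℝ) M : Vec d →L[ℝ] Vec d)‖

instance matrixMeasurableSpace {m n : Type*} : MeasurableSpace (Matrix m n ℝ) :=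
  MeasurableSpace.pi

/-- The sketching matrices `S k` are i.i.d. samples from a common distribution `D`. -/
def IIDSketch {d τ : ℕ} {Ω : Type*} [MeasurableSpace Ω] (μ : Measure Ω)
    (S : ℕ → Ω → Matrix (Fin d) (Fin τ) ℝ) : Prop :=
  (∀ k, Measurable (S k)) ∧
  ProbabilityTheory.iIndepFun (m := fun _ => matrixMeasurableSpace) S μ ∧
  ∀ k, Measure.map (S k) μ = Measure.map (S 0) μ

end

/-!
Since `(3 - 4t)² - 1 = 8 (1 - t)(1 - 2t)`, squaring the bound on `t` says exactly that
`√((1 - ρ)/(1 - 2ρ/3)) ≤ (1 - t)(1 - 2t)`. Squaring once more and clearing the positive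
denominator `1 - 2ρ/3` gives the claim.
-/

lemma le_one_sub_mul_one_sub_two_mul_of_sqrt_le {s t : ℝ} (h : √(1 + 8 * s) ≤ 3 - 4 * t) :
    s ≤ (1 - t) * (1 - 2 * t) := by
  have hsq : 1 + 8 * s ≤ (3 - 4 * t) ^ 2 := (Real.sqrt_le_iff.mp h).2
  nlinarith

theorem algebraic_rate_inequality_general (ρ t : ℝ) (hρ1 : ρ < 1)
    (hbound : t ≤ 3 / 4 - 1 / 4 * Real.sqrt (1 + 8 * Real.sqrt ((1 - ρ) / (1 - 2 / 3 * ρ)))) :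
    (1 - ρ) / ((1 - t) ^ 2 * (1 - 2 * t) ^ 2) ≤ 1 - 2 / 3 * ρ := by
  have hc : 0 < 1 - 2 / 3 * ρ := by linarith
  have hs : √((1 - ρ) / (1 - 2 / 3 * ρ)) ≤ (1 - t) * (1 - 2 * t) :=
    le_one_sub_mul_one_sub_two_mul_of_sqrt_le (by linarith)
  have hq : 1 - ρ ≤ ((1 - t) * (1 - 2 * t)) ^ 2 * (1 - 2 / 3 * ρ) :=
    (div_le_iff₀ hc).mp (Real.sqrt_le_iff.mp hs).2
  rw [← mul_pow]
  exact div_le_of_le_mul₀ (sq_nonneg _) hc.le (by linarith)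

/-- **Algebraic inequality (Lemma A.6 in the paper).** -/
theorem algebraic_rate_inequality (ρ t : ℝ) (hρ0 : 0 < ρ) (hρ1 : ρ < 1)
    (ht0 : 0 ≤ t) (ht : t < 1 / 2)
    (hbound : t ≤ 3 / 4 - 1 / 4 * Real.sqrt (1 + 8 * Real.sqrt ((1 - ρ) / (1 - 2 / 3 * ρ)))) :
    (1 - ρ) / ((1 - t) ^ 2 * (1 - 2 * t) ^ 2) ≤ 1 - 2 / 3 * ρ :=
  algebraic_rate_inequality_general ρ t hρ1 hbound
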